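/- Let n ≥ 2, let m ≥ 0, let i_1, ..., i_m ∈ {1,...,n−1}, and set w = s_{i_1}·s_{i_2}···s_{i_m} ∈ S_n. Fix 1 ≤ k < l ≤ n. For 1 ≤ j ≤ m put t_j = s_{i_{j+1}}···s_{i_m} (so t_m is the identity), and define δ_j ∈ {−1, 0, 1} by: δ_j = 1 if (t_j(k), t_j(l)) = (i_j, i_j + 1); δ_j = −1 if (t_j(k), t_j(l)) = (i_j + 1, i_j); and δ_j = 0 otherwise. Then in the group ring ℤ[S_n] one has Σ_{j=1}^m δ_j · (s_{i_1}···s_{i_{j−1}}·s_{i_{j+1}}···s_{i_m}) = w·t_{kl} if ℓ(w·t_{kl}) < ℓ(w), and Σ_{j=1}^m δ_j · (s_{i_1}···s_{i_{j−1}}·s_{i_{j+1}}···s_{i_m}) = 0 otherwise. -/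

import Mathlib

/-
Peel off the first letter: for `w = s_i w'` the terms with `j ≥ 2` are `s_i` times the
corresponding sum for `w'`, and the `j = 1` term is `δ_1 w'`. So, by induction on `m`, it suffices
that `F(w) := [w(l) < w(k)] · w t_{kl}` satisfies `F(s_i w') = δ w' + s_i F(w')`. This is a
three-case check: `s_i` preserves the relative order of `w'(k)` and `w'(l)` unless these are `i`
and `i + 1`, and in that case `w' t_{kl} = s_i w'`. Finally `ℓ(w t_{kl}) < ℓ(w)` iff
`w(l) < w(k)`: when `w(k) < w(l)`, an explicit injection maps the inversions of `w` into those of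
`w t_{kl}` other than `(k, l)`.
-/

/-- Number of inversions (the length) of a permutation of `Fin n`. -/
def invLen (n : ℕ) (w : Equiv.Perm (Fin n)) : ℕ :=
  (Finset.univ.filter (fun p : Fin n × Fin n => p.1 < p.2 ∧ w p.2 < w p.1)).card

/-- The simple reflection `s_i` of `Fin n`, swapping `i` and `i + 1` (0-indexed). -/
def simpleRefl (n : ℕ) (i : ℕ) (h : i + 1 < n) : Equiv.Perm (Fin n) :=
  Equiv.swap ⟨i, Nat.lt_of_succ_lt h⟩ ⟨i + 1, h⟩

/-- The word `(s_{i_1}, …, s_{i_m})` of simple reflections attached to a list of letters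
`a : Fin m → ℕ` (0-indexed, with `a j + 1 < n`). -/
def word (n m : ℕ) (a : Fin m → ℕ) (ha : ∀ j, a j + 1 < n) : List (Equiv.Perm (Fin n)) :=
  List.ofFn fun j => simpleRefl n (a j) (ha j)

/-- The suffix product `t_j = s_{i_{j+1}} ⋯ s_{i_m}` (so the last `t` is the identity). -/
def suffixProd (n m : ℕ) (a : Fin m → ℕ) (ha : ∀ j, a j + 1 < n) (j : Fin m) :
    Equiv.Perm (Fin n) :=
  ((word n m a ha).drop ((j : ℕ) + 1)).prod

/-- The sign `δ_j ∈ {-1, 0, 1}`: it is `1` if `(t_j(k), t_j(l)) = (i_j, i_j + 1)`,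
`-1` if `(t_j(k), t_j(l)) = (i_j + 1, i_j)`, and `0` otherwise. -/
def delta (n m : ℕ) (a : Fin m → ℕ) (ha : ∀ j, a j + 1 < n) (k l : Fin n) (j : Fin m) : ℤ :=
  if (suffixProd n m a ha j k : ℕ) = a j ∧ (suffixProd n m a ha j l : ℕ) = a j + 1 then 1
  else if (suffixProd n m a ha j k : ℕ) = a j + 1 ∧ (suffixProd n m a ha j l : ℕ) = a j then -1
  else 0

open Equiv Finset

section

variable {n : ℕ}

def inversions (w : Perm (Fin n)) : Finset (Fin n × Fin n) :=
  univ.filter fun p => p.1 < p.2 ∧ w p.2 < w p.1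

lemma mem_inversions {w : Perm (Fin n)} {p : Fin n × Fin n} :
    p ∈ inversions w ↔ p.1 < p.2 ∧ w p.2 < w p.1 := by
  simp [inversions]

lemma invLen_lt_invLen_mul_swap (w : Perm (Fin n)) {k l : Fin n} (hkl : k < l)
    (h : w k < w l) : invLen n w < invLen n (w * swap k l) := by
  let between (x : Fin n) : Prop := k < x ∧ x < l
  have swap_between (x : Fin n) : between (swap k l x) ↔ between x := by
    simp only [between, swap_apply_def]; split_ifs <;> grind
  -- Pairs meeting the open interval `(k, l)` stay inversions; the others are relabelled by `t_{kl}`.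
  let f (p : Fin n × Fin n) : Fin n × Fin n :=
    if between p.1 ∨ between p.2 then p else (swap k l p.1, swap k l p.2)
  have hkl_mem : (k, l) ∈ inversions (w * swap k l) := by
    simpa [mem_inversions, hkl] using h
  have hmaps : Set.MapsTo f (inversions w) ((inversions (w * swap k l)).erase (k, l)) := by
    rintro ⟨a, b⟩ hp
    rw [mem_coe, mem_inversions] at hp
    simp only [f, between, mem_coe, mem_erase, mem_inversions, Perm.mul_apply] at hp ⊢
    split_ifs with hin <;> rw [swap_apply_def, swap_apply_def] <;> split_ifs <;> grind
  have hinj : Set.InjOn f (inversions w) := by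
    rintro ⟨a, b⟩ - ⟨c, d⟩ - hpq
    simp only [f] at hpq
    split_ifs at hpq
    · exact hpq
    · grind
    · grind
    · simpa using hpq
  calc invLen n w ≤ ((inversions (w * swap k l)).erase (k, l)).card :=
        card_le_card_of_injOn f hmaps hinj
    _ < invLen n (w * swap k l) := card_erase_lt_of_mem hkl_mem

lemma invLen_mul_swap_lt_iff (w : Perm (Fin n)) {k l : Fin n} (hkl : k < l) :
    invLen n (w * swap k l) < invLen n w ↔ w l < w k := by
  refine ⟨fun hlt => ?_, fun h => ?_⟩
  · by_contra hle
    have h : w k < w l := (not_lt.1 hle).lt_of_ne (w.injective.ne hkl.ne)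
    exact (invLen_lt_invLen_mul_swap w hkl h).not_gt hlt
  · simpa [mul_assoc] using invLen_lt_invLen_mul_swap (w * swap k l) hkl (by simpa using h)

lemma simpleRefl_apply_lt_simpleRefl_apply_iff {i : ℕ} (hi : i + 1 < n) {x y : Fin n}
    (h : ¬((x : ℕ) = i ∧ (y : ℕ) = i + 1)) (h' : ¬((x : ℕ) = i + 1 ∧ (y : ℕ) = i)) :
    simpleRefl n i hi x < simpleRefl n i hi y ↔ x < y := by
  simp only [simpleRefl, swap_apply_def]
  split_ifs <;> simp only [Fin.lt_def, Fin.ext_iff] at * <;> omega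

lemma mul_swap_eq_simpleRefl_mul {i : ℕ} (hi : i + 1 < n) {w : Perm (Fin n)} {k l : Fin n}
    (h : ((w k : ℕ) = i ∧ (w l : ℕ) = i + 1) ∨ ((w k : ℕ) = i + 1 ∧ (w l : ℕ) = i)) :
    w * swap k l = simpleRefl n i hi * w := by
  rw [mul_swap_eq_swap_mul, simpleRefl]
  rcases h with ⟨hk, hl⟩ | ⟨hk, hl⟩
  · rw [show w k = ⟨i, _⟩ from Fin.ext hk, show w l = ⟨i + 1, hi⟩ from Fin.ext hl]
  · rw [show w k = ⟨i + 1, hi⟩ from Fin.ext hk, show w l = ⟨i, _⟩ from Fin.ext hl, swap_comm]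

noncomputable def swapDescentTerm (k l : Fin n) (w : Perm (Fin n)) :
    MonoidAlgebra ℤ (Perm (Fin n)) :=
  if w l < w k then MonoidAlgebra.single (w * swap k l) 1 else 0

lemma swapDescentTerm_simpleRefl_mul {i : ℕ} (hi : i + 1 < n) (w : Perm (Fin n)) (k l : Fin n) :
    swapDescentTerm k l (simpleRefl n i hi * w) =
      MonoidAlgebra.single w
          (if (w k : ℕ) = i ∧ (w l : ℕ) = i + 1 then 1
            else if (w k : ℕ) = i + 1 ∧ (w l : ℕ) = i then -1 else 0) +
        MonoidAlgebra.single (simpleRefl n i hi) 1 * swapDescentTerm k l w := by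
  simp only [swapDescentTerm, mul_ite, mul_zero, MonoidAlgebra.single_mul_single, one_mul,
    ← mul_assoc]
  by_cases hδ : ((w k : ℕ) = i ∧ (w l : ℕ) = i + 1) ∨ ((w k : ℕ) = i + 1 ∧ (w l : ℕ) = i)
  · rw [← mul_swap_eq_simpleRefl_mul hi hδ]
    rcases hδ with ⟨hk, hl⟩ | ⟨hk, hl⟩
    · have hlt : w k < w l := by rw [Fin.lt_def]; omega
      simp [hlt, hlt.not_gt, hk, hl]
    · have hlt : w l < w k := by rw [Fin.lt_def]; omega
      simp [hlt, hlt.not_gt, hk, hl]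
  · have hdesc : (simpleRefl n i hi * w) l < (simpleRefl n i hi * w) k ↔ w l < w k :=
      simpleRefl_apply_lt_simpleRefl_apply_iff hi (by tauto) (by tauto)
    rw [not_or] at hδ
    simp only [hdesc, if_neg hδ.1, if_neg hδ.2, MonoidAlgebra.single_zero, zero_add]

lemma word_succ (m : ℕ) (a : Fin (m + 1) → ℕ) (ha : ∀ j, a j + 1 < n) :
    word n (m + 1) a ha =
      simpleRefl n (a 0) (ha 0) :: word n m (fun j => a j.succ) (fun j => ha j.succ) := by
  simp [word, List.ofFn_succ]

lemma suffixProd_zero (m : ℕ) (a : Fin (m + 1) → ℕ) (ha : ∀ j, a j + 1 < n) :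
    suffixProd n (m + 1) a ha 0 = (word n m (fun j => a j.succ) (fun j => ha j.succ)).prod := by
  simp [suffixProd, word_succ]

lemma suffixProd_succ (m : ℕ) (a : Fin (m + 1) → ℕ) (ha : ∀ j, a j + 1 < n) (j : Fin m) :
    suffixProd n (m + 1) a ha j.succ =
      suffixProd n m (fun j => a j.succ) (fun j => ha j.succ) j := by
  simp [suffixProd, word_succ]

lemma delta_succ (m : ℕ) (a : Fin (m + 1) → ℕ) (ha : ∀ j, a j + 1 < n) (k l : Fin n)
    (j : Fin m) :
    delta n (m + 1) a ha k l j.succ = delta n m (fun j => a j.succ) (fun j => ha j.succ) k l j := by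
  simp only [delta, suffixProd_succ]

theorem sum_single_eraseIdx_delta (m : ℕ) (a : Fin m → ℕ) (ha : ∀ j, a j + 1 < n)
    {k l : Fin n} (hkl : k ≤ l) :
    ∑ j : Fin m, MonoidAlgebra.single (((word n m a ha).eraseIdx j).prod) (delta n m a ha k l j) =
      swapDescentTerm k l (word n m a ha).prod := by
  induction m with
  | zero => simp [word, swapDescentTerm, hkl.not_gt]
  | succ m ih =>
    simp only [Fin.sum_univ_succ, delta_succ, word_succ, Fin.val_zero, Fin.val_succ,
      List.eraseIdx_cons_zero, List.eraseIdx_cons_succ, List.prod_cons]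
    rw [swapDescentTerm_simpleRefl_mul, ← ih, Finset.mul_sum, delta, suffixProd_zero]
    simp only [MonoidAlgebra.single_mul_single, one_mul]

end

theorem sum_delta_eraseIdx_eq_general (n : ℕ) (m : ℕ) (a : Fin m → ℕ)
    (ha : ∀ j, a j + 1 < n) (k l : Fin n) (hkl : k < l) :
    (∑ j : Fin m,
        MonoidAlgebra.single (((word n m a ha).eraseIdx (j : ℕ)).prod)
          (delta n m a ha k l j)) =
      if invLen n ((word n m a ha).prod * Equiv.swap k l) < invLen n ((word n m a ha).prod)
        then MonoidAlgebra.single ((word n m a ha).prod * Equiv.swap k l) (1 : ℤ)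
        else 0 := by
  rw [sum_single_eraseIdx_delta m a ha hkl.le, swapDescentTerm]
  simp only [invLen_mul_swap_lt_iff _ hkl]

/-- In the group ring `ℤ[S_n]`, the signed sum of the products of the word with its `j`-th
letter omitted equals `w·t_{kl}` if `ℓ(w·t_{kl}) < ℓ(w)`, and `0` otherwise. -/
theorem sum_delta_eraseIdx_eq (n : ℕ) (hn : 2 ≤ n) (m : ℕ) (a : Fin m → ℕ)
    (ha : ∀ j, a j + 1 < n) (k l : Fin n) (hkl : k < l) :
    (∑ j : Fin m,
        MonoidAlgebra.single (((word n m a ha).eraseIdx (j : ℕ)).prod)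
          (delta n m a ha k l j)) =
      if invLen n ((word n m a ha).prod * Equiv.swap k l) < invLen n ((word n m a ha).prod)
        then MonoidAlgebra.single ((word n m a ha).prod * Equiv.swap k l) (1 : ℤ)
        else 0 :=
  sum_delta_eraseIdx_eq_general n m a ha k l hkl
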